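/- arXiv:1905.05336 — 4 statements merged into one kernel-verified Lean document; each statement's English description precedes it below -/
import Mathlib

section
/- Let f : ℝ → ℝ be differentiable with continuous derivative, let 0 < α < 2, let μ > 0, and let x : ℕ → ℝ be a sequence satisfying the simplified fractional order gradient iteration x_{K+1} = x_K − μ · (f'(x_{K−1}) / Γ(2−α)) · |x_K − x_{K−1}|^{1−α} for all K ≥ 1, where no step stalls, i.e. x_K ≠ x_{K−1} for all K ≥ 1. If the sequence x converges to a point X, then f'(X) = 0; that is, the method can only converge to a true critical (extreme) point of f. -/
open Filter Topology

/-- If the simplified fractional order gradient method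
`x_{K+1} = x_K − μ (f'(x_{K−1}) / Γ(2−α)) |x_K − x_{K−1}|^{1−α}`
(with order `0 < α < 2`, step size `μ > 0`, and no stalled steps)
converges, then its limit is a true critical point of `f`. -/
theorem frac_grad_converges_to_critical_point
    (f : ℝ → ℝ) (hf : Differentiable ℝ f) (hf' : Continuous (deriv f))
    (α μ : ℝ) (hα0 : 0 < α) (hα2 : α < 2) (hμ : 0 < μ)
    (x : ℕ → ℝ)
    (hiter : ∀ K : ℕ, 1 ≤ K →
      x (K + 1) = x K - μ * (deriv f (x (K - 1)) / Real.Gamma (2 - α)) *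
        |x K - x (K - 1)| ^ (1 - α))
    (hstep : ∀ K : ℕ, 1 ≤ K → x K ≠ x (K - 1))
    (X : ℝ) (hconv : Tendsto x atTop (𝓝 X)) :
    deriv f X = 0 := by
  by_contra hX
  have hΓ : 0 < Real.Gamma (2 - α) := Real.Gamma_pos_of_pos (by linarith)
  set c : ℕ → ℝ := fun K => μ * (deriv f (x K) / Real.Gamma (2 - α)) with hc
  set y : ℕ → ℝ := fun K => |x (K + 1) - x K| with hy
  -- positivity of steps
  have hypos : ∀ K, 0 < y K := by
    intro K
    have h := hstep (K + 1) (Nat.le_add_left 1 K)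
    simp only [Nat.add_sub_cancel] at h
    simpa [hy, abs_pos, sub_ne_zero] using h
  -- the recurrence
  have hrec : ∀ K : ℕ, 1 ≤ K → y K = |c (K - 1)| * y (K - 1) ^ (1 - α) := by
    intro K hK
    have hK1 : K - 1 + 1 = K := Nat.succ_pred_eq_of_pos hK
    have h := hiter K hK
    have : x (K + 1) - x K = -(c (K - 1) * |x K - x (K - 1)| ^ (1 - α)) := by
      rw [h]; ring
    have hy1 : y (K - 1) = |x K - x (K - 1)| := by simp only [hy]; rw [hK1]
    show |x (K + 1) - x K| = _
    rw [this, abs_neg, abs_mul,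
      abs_of_nonneg (Real.rpow_nonneg (abs_nonneg _) _), ← hy1]
  -- y tends to 0
  have hy0 : Tendsto y atTop (𝓝 0) := by
    have h1 : Tendsto (fun K => x (K + 1)) atTop (𝓝 X) :=
      hconv.comp (tendsto_add_atTop_nat 1)
    have := (h1.sub hconv).abs
    simpa [hy] using this
  -- c (K-1) tends to C ≠ 0
  set C : ℝ := μ * (deriv f X / Real.Gamma (2 - α)) with hC
  have hCne : C ≠ 0 :=
    mul_ne_zero (ne_of_gt hμ) (div_ne_zero hX (ne_of_gt hΓ))
  have hCpos : 0 < |C| := abs_pos.mpr hCne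
  have hcc : Tendsto (fun K => c (K - 1)) atTop (𝓝 C) := by
    have h1 : Tendsto (fun K : ℕ => x (K - 1)) atTop (𝓝 X) :=
      hconv.comp (Filter.tendsto_sub_atTop_nat 1)
    have h2 : Tendsto (fun K : ℕ => deriv f (x (K - 1))) atTop (𝓝 (deriv f X)) :=
      (hf'.tendsto X).comp h1
    exact (h2.div_const _).const_mul μ
  set m : ℝ := |C| / 2 with hm
  have hmpos : 0 < m := by positivity
  have hev : ∀ᶠ K in atTop, m < |c (K - 1)| :=
    hcc.abs.eventually (eventually_gt_nhds (by rw [hm]; linarith))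
  obtain ⟨N₀, hN₀⟩ := eventually_atTop.mp hev
  rcases le_or_gt 1 α with hα1 | hα1
  · -- case α ≥ 1 : exponent 1 - α ≤ 0, so y (K-1) ^ (1-α) ≥ 1 eventually
    have hev1 : ∀ᶠ K in atTop, y K ≤ 1 :=
      hy0.eventually (eventually_le_nhds one_pos)
    obtain ⟨N₁, hN₁⟩ := eventually_atTop.mp hev1
    have hevm : ∀ K, max (max N₀ (N₁ + 1)) 1 ≤ K → m ≤ y K := by
      intro K hK
      have hK1 : 1 ≤ K := le_trans (le_max_right _ _) hK
      have hKN₀ : N₀ ≤ K := le_trans (le_max_left _ _) (le_trans (le_max_left _ _) hK)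
      have hKN₁ : N₁ ≤ K - 1 := by
        have : N₁ + 1 ≤ K := le_trans (le_max_right _ _) (le_trans (le_max_left _ _) hK)
        omega
      have h1 : 1 ≤ y (K - 1) ^ (1 - α) :=
        Real.one_le_rpow_of_pos_of_le_one_of_nonpos (hypos _) (hN₁ _ hKN₁)
          (by linarith)
      calc m = m * 1 := (mul_one m).symm
        _ ≤ |c (K - 1)| * y (K - 1) ^ (1 - α) := by
            apply mul_le_mul (le_of_lt (hN₀ K hKN₀)) h1 zero_le_one
              (abs_nonneg _)
        _ = y K := (hrec K hK1).symm
    have hev2 : ∀ᶠ K in atTop, y K < m :=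
      hy0.eventually (eventually_lt_nhds hmpos)
    obtain ⟨N₂, hN₂⟩ := eventually_atTop.mp hev2
    have hK := max (max (max N₀ (N₁ + 1)) 1) N₂
    exact absurd (hevm _ (le_trans (le_max_left _ _) (le_refl _)))
      (not_le.mpr (hN₂ _ (le_max_right _ _)))
  · -- case α < 1 : exponent q = 1 - α ∈ (0,1)
    set N : ℕ := max N₀ 1 with hN
    have hN1 : 1 ≤ N := le_max_right _ _
    set t : ℝ := min (y (N - 1)) (m ^ α⁻¹) with ht
    have htpos : 0 < t :=
      lt_min (hypos _) (Real.rpow_pos_of_pos hmpos _)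
    have hmt : t ≤ m * t ^ (1 - α) := by
      have h1 : t ^ α ≤ m := by
        calc t ^ α ≤ (m ^ α⁻¹) ^ α :=
              Real.rpow_le_rpow (le_of_lt htpos) (min_le_right _ _) (le_of_lt hα0)
          _ = m := Real.rpow_inv_rpow (le_of_lt hmpos) (ne_of_gt hα0)
      calc t = t ^ (1 : ℝ) := (Real.rpow_one t).symm
        _ = t ^ α * t ^ (1 - α) := by
            rw [← Real.rpow_add htpos]; ring_nf
        _ ≤ m * t ^ (1 - α) := by
            apply mul_le_mul_of_nonneg_right h1 (Real.rpow_nonneg (le_of_lt htpos) _)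
    have hind : ∀ j : ℕ, t ≤ y (N - 1 + j) := by
      intro j
      induction j with
      | zero => rw [Nat.add_zero]; exact min_le_left _ _
      | succ j ih =>
        have hKeq : N - 1 + (j + 1) = N + j := by omega
        have hKeq' : N + j - 1 = N - 1 + j := by omega
        rw [hKeq, hrec (N + j) (by omega), hKeq']
        have hNge : N₀ ≤ N := le_max_left _ _
        have hc1 : m ≤ |c (N + j - 1)| := le_of_lt (hN₀ _ (by omega))
        rw [hKeq'] at hc1
        calc t ≤ m * t ^ (1 - α) := hmt
          _ ≤ |c (N - 1 + j)| * y (N - 1 + j) ^ (1 - α) := by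
              apply mul_le_mul hc1
                (Real.rpow_le_rpow (le_of_lt htpos) ih (by linarith))
                (Real.rpow_nonneg (le_of_lt htpos) _) (abs_nonneg _)
    have hev2 : ∀ᶠ K in atTop, y K < t :=
      hy0.eventually (eventually_lt_nhds htpos)
    obtain ⟨N₂, hN₂⟩ := eventually_atTop.mp hev2
    have h1 := hind (N₂ + N₂)
    have h2 := hN₂ (N - 1 + (N₂ + N₂)) (by omega)
    linarith
end

section
/- Let 0 < α < 2 and μ > 0, let g : ℕ → ℝ be a sequence of real numbers (gradient values), and let w : ℕ → ℝ satisfy the fractional order update w_{K+1} = w_K − (μ / Γ(2−α)) · g_{K−1} · |w_K − w_{K−1}|^{1−α} for all K ≥ 1, with w_K ≠ w_{K−1} for all K ≥ 1. If the sequence w converges, then lim inf_{K→∞} |g_K| = 0; equivalently, it is impossible that the gradient values |g_K| are bounded below by a positive constant for all sufficiently large K while w converges. -/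
open Filter Topology

/-- If a scalar parameter updated by the fractional order rule
`w_{K+1} = w_K − (μ/Γ(2−α)) g_{K−1} |w_K − w_{K−1}|^{1−α}`
(with `0 < α < 2`, `μ > 0`, and no stalled steps) converges, then the
driving gradient magnitudes `|g_K|` have `liminf` equal to `0`. -/
theorem frac_update_convergence_implies_liminf_grad_zero
    (α μ : ℝ) (hα0 : 0 < α) (hα2 : α < 2) (hμ : 0 < μ)
    (g w : ℕ → ℝ)
    (hiter : ∀ K : ℕ, 1 ≤ K →
      w (K + 1) = w K - (μ / Real.Gamma (2 - α)) * g (K - 1) *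
        |w K - w (K - 1)| ^ (1 - α))
    (hstep : ∀ K : ℕ, 1 ≤ K → w K ≠ w (K - 1))
    (hconv : ∃ L : ℝ, Tendsto w atTop (𝓝 L)) :
    Filter.liminf (fun K => |g K|) Filter.atTop = 0 := by
  obtain ⟨L, hL⟩ := hconv
  have hΓ : 0 < Real.Gamma (2 - α) := Real.Gamma_pos_of_pos (by linarith)
  set C : ℝ := μ / Real.Gamma (2 - α) with hCdef
  have hCpos : 0 < C := div_pos hμ hΓ
  have hdpos : ∀ K : ℕ, 0 < |w (K + 1) - w K| := by
    intro K
    have h := hstep (K + 1) (by omega)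
    simp only [Nat.add_sub_cancel] at h
    exact abs_pos.mpr (sub_ne_zero.mpr h)
  have hrec : ∀ K : ℕ, |w (K + 2) - w (K + 1)| =
      C * |g K| * |w (K + 1) - w K| ^ (1 - α) := by
    intro K
    have h := hiter (K + 1) (by omega)
    simp only [Nat.add_sub_cancel] at h
    have heq : w (K + 2) - w (K + 1) =
        -(C * g K * |w (K + 1) - w K| ^ (1 - α)) := by
      rw [show K + 2 = K + 1 + 1 from rfl, h]; ring
    rw [heq, abs_neg, abs_mul, abs_mul, abs_of_pos hCpos,
      abs_of_pos (Real.rpow_pos_of_pos (hdpos K) _)]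
  -- the step sizes tend to 0
  have hw1 : Tendsto (fun K => w (K + 1)) atTop (𝓝 L) :=
    hL.comp (tendsto_add_atTop_nat 1)
  have hd0 : Tendsto (fun K => |w (K + 1) - w K|) atTop (𝓝 0) := by
    have := (hw1.sub hL).abs
    simpa using this
  -- key: the gradient magnitudes cannot be eventually bounded below by a positive constant
  have key : ∀ c : ℝ, 0 < c → ¬ (∀ᶠ K in atTop, c ≤ |g K|) := by
    intro c hc hev
    rw [eventually_atTop] at hev
    obtain ⟨N, hN⟩ := hev
    set C' : ℝ := C * c with hC'def
    have hC' : 0 < C' := mul_pos hCpos hc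
    set ε : ℝ := (C' / 2) ^ (1 / α : ℝ) with hεdef
    have hε : 0 < ε := Real.rpow_pos_of_pos (by positivity) _
    have hεα : ε ^ α = C' / 2 := by
      rw [hεdef, ← Real.rpow_mul (by positivity), one_div_mul_cancel hα0.ne',
        Real.rpow_one]
    obtain ⟨M, hM⟩ := (Metric.tendsto_atTop.mp hd0) ε hε
    have hdle : ∀ K, M ≤ K → |w (K + 1) - w K| ≤ ε := by
      intro K hK
      have := hM K hK
      rw [Real.dist_eq, sub_zero, abs_abs] at this
      exact this.le
    set M' : ℕ := max M N with hM'def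
    have grow : ∀ K, M' ≤ K → 2 * |w (K + 1) - w K| ≤ |w (K + 2) - w (K + 1)| := by
      intro K hK
      have hgK : c ≤ |g K| := hN K (le_trans (le_max_right M N) hK)
      have hdK : |w (K + 1) - w K| ≤ ε := hdle K (le_trans (le_max_left M N) hK)
      have hpos := hdpos K
      have h1 : C' * |w (K + 1) - w K| ^ (1 - α) ≤ |w (K + 2) - w (K + 1)| := by
        rw [hrec K, hC'def]
        exact mul_le_mul_of_nonneg_right
          (mul_le_mul_of_nonneg_left hgK hCpos.le)
          (Real.rpow_nonneg (abs_nonneg _) _)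
      have h2 : |w (K + 1) - w K| ^ (1 - α) =
          |w (K + 1) - w K| * (|w (K + 1) - w K| ^ α)⁻¹ := by
        rw [show (1 - α : ℝ) = 1 + (-α) by ring, Real.rpow_add hpos,
          Real.rpow_one, Real.rpow_neg hpos.le]
      have h3 : |w (K + 1) - w K| ^ α ≤ C' / 2 := by
        rw [← hεα]
        exact Real.rpow_le_rpow (abs_nonneg _) hdK hα0.le
      have h4 : 0 < |w (K + 1) - w K| ^ α := Real.rpow_pos_of_pos hpos _
      have h5 : (C' / 2)⁻¹ ≤ (|w (K + 1) - w K| ^ α)⁻¹ :=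
        inv_anti₀ h4 h3
      have h6 : 2 * |w (K + 1) - w K| ≤ C' * |w (K + 1) - w K| ^ (1 - α) := by
        rw [h2]
        have : C' * (|w (K + 1) - w K| * (C' / 2)⁻¹) ≤
            C' * (|w (K + 1) - w K| * (|w (K + 1) - w K| ^ α)⁻¹) := by
          apply mul_le_mul_of_nonneg_left _ hC'.le
          exact mul_le_mul_of_nonneg_left h5 hpos.le
        calc 2 * |w (K + 1) - w K|
            = C' * (|w (K + 1) - w K| * (C' / 2)⁻¹) := by
              field_simp
          _ ≤ _ := this
      linarith
    have hind : ∀ n : ℕ, 2 ^ n * |w (M' + 1) - w M'| ≤ |w (M' + n + 1) - w (M' + n)| := by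
      intro n
      induction n with
      | zero => simp
      | succ n ih =>
        have hg := grow (M' + n) (by omega)
        have : 2 ^ (n + 1) * |w (M' + 1) - w M'| =
            2 * (2 ^ n * |w (M' + 1) - w M'|) := by ring
        rw [this]
        have h2' : 2 * (2 ^ n * |w (M' + 1) - w M'|) ≤
            2 * |w (M' + n + 1) - w (M' + n)| := by linarith
        calc 2 * (2 ^ n * |w (M' + 1) - w M'|)
            ≤ 2 * |w (M' + n + 1) - w (M' + n)| := h2'
          _ ≤ |w (M' + n + 2) - w (M' + n + 1)| := hg
          _ = |w (M' + (n + 1) + 1) - w (M' + (n + 1))| := by ring_nf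
    have hd0pos : 0 < |w (M' + 1) - w M'| := hdpos M'
    obtain ⟨n, hn⟩ := pow_unbounded_of_one_lt (ε / |w (M' + 1) - w M'|) (by norm_num : (1:ℝ) < 2)
    have hub : |w (M' + n + 1) - w (M' + n)| ≤ ε :=
      hdle (M' + n) (by omega)
    have := hind n
    rw [div_lt_iff₀ hd0pos] at hn
    linarith
  -- conclude liminf = 0
  have hS : {a : ℝ | ∀ᶠ K in atTop, a ≤ |g K|} = Set.Iic 0 := by
    ext a
    simp only [Set.mem_setOf_eq, Set.mem_Iic]
    constructor
    · intro h
      by_contra h0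
      push_neg at h0
      exact key a h0 h
    · intro ha
      exact Filter.Eventually.of_forall fun K => ha.trans (abs_nonneg _)
  rw [Filter.liminf_eq, hS, csSup_Iic]
end

section
/- Let 0 < α < 2, μ > 0, and let n, m be positive natural numbers. Let G : ℕ → Matrix (Fin n) (Fin m) ℝ be a sequence of gradient matrices and W : ℕ → Matrix (Fin n) (Fin m) ℝ a sequence of weight matrices satisfying, entrywise, W_{K+1}(i,j) = W_K(i,j) − (μ / Γ(2−α)) · G_{K−1}(i,j) · |W_K(i,j) − W_{K−1}(i,j)|^{1−α} for all K ≥ 1, with W_K(i,j) ≠ W_{K−1}(i,j) for all K ≥ 1 and all (i,j). If for each entry (i,j) the real sequence K ↦ W_K(i,j) converges, then for every entry (i,j) one has lim inf_{K→∞} |G_K(i,j)| = 0; in particular, the weights of a fully connected layer updated by the fractional order gradient method can only converge to a point where the (integer order) gradient of the loss vanishes along a subsequence. -/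
open Filter Topology

/-- Weights of a fully connected layer updated entrywise by the fractional
order gradient method can only converge to a point where the integer order
gradient vanishes along a subsequence: if every entry of `W_K` converges,
then every entry of the gradient matrices satisfies `liminf |G_K(i,j)| = 0`. -/
theorem fc_layer_frac_grad_convergence
    (α μ : ℝ) (hα0 : 0 < α) (hα2 : α < 2) (hμ : 0 < μ)
    (n m : ℕ) (hn : 0 < n) (hm : 0 < m)
    (G W : ℕ → Matrix (Fin n) (Fin m) ℝ)
    (hiter : ∀ K : ℕ, 1 ≤ K → ∀ (i : Fin n) (j : Fin m),
      W (K + 1) i j = W K i j - (μ / Real.Gamma (2 - α)) * G (K - 1) i j *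
        |W K i j - W (K - 1) i j| ^ (1 - α))
    (hstep : ∀ K : ℕ, 1 ≤ K → ∀ (i : Fin n) (j : Fin m),
      W K i j ≠ W (K - 1) i j)
    (hconv : ∀ (i : Fin n) (j : Fin m),
      ∃ L : ℝ, Tendsto (fun K => W K i j) atTop (𝓝 L)) :
    ∀ (i : Fin n) (j : Fin m),
      Filter.liminf (fun K => |G K i j|) Filter.atTop = 0 := by
  intro i j
  set c : ℝ := μ / Real.Gamma (2 - α) with hc
  have hΓ : 0 < Real.Gamma (2 - α) := Real.Gamma_pos_of_pos (by linarith)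
  have hcpos : 0 < c := div_pos hμ hΓ
  set w : ℕ → ℝ := fun K => W K i j with hw
  set d : ℕ → ℝ := fun K => |w (K + 1) - w K| with hd
  have hdpos : ∀ K, 0 < d K := by
    intro K
    have h := hstep (K + 1) (Nat.le_add_left 1 K) i j
    simp only [Nat.add_sub_cancel] at h
    exact abs_pos.mpr (sub_ne_zero.mpr h)
  have hrec : ∀ K, d (K + 1) = c * |G K i j| * d K ^ (1 - α) := by
    intro K
    have h := hiter (K + 1) (Nat.le_add_left 1 K) i j
    simp only [Nat.add_sub_cancel] at h
    have heq : w (K + 1 + 1) - w (K + 1) = -(c * G K i j * d K ^ (1 - α)) := by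
      simp only [hd, hw]
      rw [h]; ring
    have hpow : (0 : ℝ) ≤ d K ^ (1 - α) := Real.rpow_nonneg (abs_nonneg _) _
    calc d (K + 1) = |(-(c * G K i j * d K ^ (1 - α)))| := by
          rw [show d (K + 1) = |w (K + 1 + 1) - w (K + 1)| from rfl, heq]
      _ = c * |G K i j| * d K ^ (1 - α) := by
          rw [abs_neg, abs_mul, abs_mul, abs_of_pos hcpos, abs_of_nonneg hpow]
  have hd0 : Tendsto d atTop (𝓝 0) := by
    obtain ⟨L, hL⟩ := hconv i j
    have h1 : Tendsto (fun K => w (K + 1)) atTop (𝓝 L) :=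
      hL.comp (tendsto_add_atTop_nat 1)
    have h2 : Tendsto (fun K => w (K + 1) - w K) atTop (𝓝 (L - L)) := h1.sub hL
    rw [sub_self] at h2
    simpa [hd] using h2.abs
  -- key claim: the gradient entries are frequently small
  have key : ∀ ε : ℝ, 0 < ε → ∃ᶠ K in atTop, |G K i j| < ε := by
    intro ε hε
    by_contra hcon
    rw [not_frequently] at hcon
    have hev : ∀ᶠ K in atTop, ε ≤ |G K i j| := hcon.mono fun K h => not_lt.mp h
    obtain ⟨N1, hN1⟩ := eventually_atTop.mp hev
    have hcε : (0 : ℝ) < c * ε := mul_pos hcpos hε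
    have hδ : (0 : ℝ) < (c * ε) ^ (1 / α) := Real.rpow_pos_of_pos hcε _
    obtain ⟨N2, hN2⟩ := eventually_atTop.mp (hd0.eventually_lt_const hδ)
    set N := max N1 N2 with hN
    have hmono : ∀ K, N ≤ K → d K ≤ d (K + 1) := by
      intro K hK
      have hG : ε ≤ |G K i j| := hN1 K (le_trans (le_max_left _ _) hK)
      have hdle : d K ≤ (c * ε) ^ (1 / α) :=
        (hN2 K (le_trans (le_max_right _ _) hK)).le
      have hdKpos := hdpos K
      -- d K ^ α ≤ c * ε
      have hpow : d K ^ α ≤ c * ε := by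
        calc d K ^ α ≤ ((c * ε) ^ (1 / α)) ^ α :=
              Real.rpow_le_rpow hdKpos.le hdle hα0.le
          _ = (c * ε) ^ (1 / α * α) := by rw [← Real.rpow_mul hcε.le]
          _ = c * ε := by rw [one_div_mul_cancel hα0.ne', Real.rpow_one]
      have hpowpos : 0 < d K ^ α := Real.rpow_pos_of_pos hdKpos _
      have hfac : 1 ≤ c * ε * d K ^ (-α) := by
        rw [Real.rpow_neg hdKpos.le, ← div_eq_mul_inv]
        exact (one_le_div hpowpos).mpr hpow
      have hsplit : d K ^ (1 - α) = d K * d K ^ (-α) := by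
        rw [show (1 : ℝ) - α = 1 + -α by ring, Real.rpow_add hdKpos,
          Real.rpow_one]
      have hneg : (0 : ℝ) < d K ^ (-α) := Real.rpow_pos_of_pos hdKpos _
      calc d K = 1 * d K := (one_mul _).symm
        _ ≤ (c * ε * d K ^ (-α)) * d K :=
            mul_le_mul_of_nonneg_right hfac hdKpos.le
        _ = c * ε * d K ^ (1 - α) := by rw [hsplit]; ring
        _ ≤ c * |G K i j| * d K ^ (1 - α) := by
            have : (0 : ℝ) ≤ d K ^ (1 - α) := Real.rpow_nonneg hdKpos.le _
            have hcG : c * ε ≤ c * |G K i j| :=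
              mul_le_mul_of_nonneg_left hG hcpos.le
            exact mul_le_mul_of_nonneg_right hcG this
        _ = d (K + 1) := (hrec K).symm
    have hge : ∀ k : ℕ, d N ≤ d (N + k) := by
      intro k
      induction k with
      | zero => simp
      | succ k ih =>
        exact le_trans ih (hmono (N + k) (Nat.le_add_right _ _))
    obtain ⟨N3, hN3⟩ := eventually_atTop.mp (hd0.eventually_lt_const (hdpos N))
    have hK : d (N + N3) < d N := hN3 (N + N3) (Nat.le_add_left _ _)
    exact absurd (hge N3) (not_le.mpr hK)
  have hbdd : IsBoundedUnder (· ≥ ·) atTop (fun K => |G K i j|) :=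
    isBoundedUnder_of ⟨0, fun K => abs_nonneg _⟩
  have hcob : IsCoboundedUnder (· ≥ ·) atTop (fun K => |G K i j|) :=
    IsCoboundedUnder.of_frequently_le ((key 1 one_pos).mono fun K h => h.le)
  have hge0 : 0 ≤ liminf (fun K => |G K i j|) atTop :=
    le_liminf_of_le hcob (Eventually.of_forall fun K => abs_nonneg _)
  have hle0 : liminf (fun K => |G K i j|) atTop ≤ 0 := by
    by_contra h
    push_neg at h
    have := liminf_le_of_frequently_le
      ((key _ (half_pos h)).mono fun K hK => hK.le) hbdd
    linarith
  exact le_antisymm hle0 hge0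
end

section
/- Let 0 < α < 2, μ > 0, and let n be a positive natural number. Let g : ℕ → (Fin n → ℝ) be a sequence of gradient vectors and b : ℕ → (Fin n → ℝ) a sequence of bias vectors satisfying, componentwise, b_{K+1}(i) = b_K(i) − (μ / Γ(2−α)) · g_{K−1}(i) · |b_K(i) − b_{K−1}(i)|^{1−α} for all K ≥ 1, with b_K(i) ≠ b_{K−1}(i) for all K ≥ 1 and all i. If for each component i the real sequence K ↦ b_K(i) converges, then for every component i one has lim inf_{K→∞} |g_K(i)| = 0; in particular, the biases of a layer updated by the fractional order gradient method can only converge to a point where the (integer order) gradient of the loss vanishes along a subsequence. -/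
open Filter Topology

/-- Biases of a layer updated componentwise by the fractional order gradient
method can only converge to a point where the integer order gradient vanishes
along a subsequence: if every component of `b_K` converges, then every
component of the gradient vectors satisfies `liminf |g_K(i)| = 0`. -/
theorem bias_frac_grad_convergence
    (α μ : ℝ) (hα0 : 0 < α) (hα2 : α < 2) (hμ : 0 < μ)
    (n : ℕ) (hn : 0 < n)
    (g b : ℕ → (Fin n → ℝ))
    (hiter : ∀ K : ℕ, 1 ≤ K → ∀ i : Fin n,
      b (K + 1) i = b K i - (μ / Real.Gamma (2 - α)) * g (K - 1) i *
        |b K i - b (K - 1) i| ^ (1 - α))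
    (hstep : ∀ K : ℕ, 1 ≤ K → ∀ i : Fin n, b K i ≠ b (K - 1) i)
    (hconv : ∀ i : Fin n, ∃ L : ℝ, Tendsto (fun K => b K i) atTop (𝓝 L)) :
    ∀ i : Fin n, Filter.liminf (fun K => |g K i|) Filter.atTop = 0 := by
  intro i
  set c : ℝ := μ / Real.Gamma (2 - α) with hc_def
  have hΓ : 0 < Real.Gamma (2 - α) := Real.Gamma_pos_of_pos (by linarith)
  have hc : 0 < c := div_pos hμ hΓ
  -- the step sizes
  set D : ℕ → ℝ := fun K => |b (K + 1) i - b K i| with hD_def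
  have hD0 : ∀ K, 0 < D K := by
    intro K
    have h := hstep (K + 1) (by omega) i
    simp only [Nat.add_sub_cancel] at h
    exact abs_pos.mpr (sub_ne_zero.mpr h)
  have hDrec : ∀ K : ℕ, 1 ≤ K → D K = c * |g (K - 1) i| * D (K - 1) ^ (1 - α) := by
    intro K hK
    have h := hiter K hK i
    have hKm : K - 1 + 1 = K := Nat.succ_pred_eq_of_pos hK
    have hX : (0:ℝ) ≤ |b K i - b (K - 1) i| ^ (1 - α) :=
      Real.rpow_nonneg (abs_nonneg _) _
    simp only [hD_def, hKm]
    rw [h]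
    rw [show b K i - c * g (K - 1) i * |b K i - b (K - 1) i| ^ (1 - α) - b K i
        = -(c * g (K - 1) i * |b K i - b (K - 1) i| ^ (1 - α)) by ring]
    rw [abs_neg, abs_mul, abs_mul, abs_of_pos hc, abs_of_nonneg hX]
  -- D tends to 0
  obtain ⟨L, hL⟩ := hconv i
  have hDto0 : Tendsto D atTop (𝓝 0) := by
    have h1 : Tendsto (fun K => b (K + 1) i) atTop (𝓝 L) :=
      hL.comp (tendsto_add_atTop_nat 1)
    have h2 : Tendsto (fun K => b (K + 1) i - b K i) atTop (𝓝 (L - L)) := h1.sub hL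
    rw [sub_self] at h2
    have := h2.abs
    simpa using this
  -- suppose the liminf is nonzero
  by_contra hne
  rw [Filter.liminf_eq] at hne
  set S : Set ℝ := {a | ∀ᶠ K in atTop, a ≤ |g K i|} with hS_def
  by_cases hbdd : BddAbove S
  · have h0S : (0:ℝ) ∈ S := Eventually.of_forall fun K => abs_nonneg _
    have hS0 : 0 ≤ sSup S := le_csSup hbdd h0S
    have hSpos : 0 < sSup S := lt_of_le_of_ne hS0 (Ne.symm hne)
    set ε : ℝ := sSup S / 2 with hε_def
    have hε : 0 < ε := by positivity
    have hε2 : ε < sSup S := by linarith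
    obtain ⟨a, haS, hεa⟩ := exists_lt_of_lt_csSup ⟨0, h0S⟩ hε2
    have hev : ∀ᶠ K in atTop, ε ≤ |g K i| :=
      haS.mono fun K hK => le_trans hεa.le hK
    obtain ⟨N, hN⟩ := eventually_atTop.mp hev
    -- key inequality
    have hkey : ∀ K : ℕ, N + 1 ≤ K → c * ε * D (K - 1) ^ (1 - α) ≤ D K := by
      intro K hK
      rw [hDrec K (by omega)]
      have hg : ε ≤ |g (K - 1) i| := hN (K - 1) (by omega)
      have hX : (0:ℝ) < D (K - 1) ^ (1 - α) :=
        Real.rpow_pos_of_pos (hD0 _) _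
      have := mul_le_mul_of_nonneg_right (mul_le_mul_of_nonneg_left hg hc.le) hX.le
      linarith
    by_cases hα1 : α < 1
    · -- case α < 1 : D is bounded below by a positive constant
      set m : ℝ := min (D N) ((c * ε) ^ (1 / α)) with hm_def
      have hm : 0 < m :=
        lt_min (hD0 N) (Real.rpow_pos_of_pos (by positivity) _)
      have hmα : m ^ α ≤ c * ε := by
        have h1 : m ^ α ≤ ((c * ε) ^ (1 / α)) ^ α :=
          Real.rpow_le_rpow hm.le (min_le_right _ _) hα0.le
        have h2 : ((c * ε) ^ (1 / α)) ^ α = c * ε := by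
          rw [← Real.rpow_mul (by positivity), one_div,
            inv_mul_cancel₀ hα0.ne', Real.rpow_one]
        rw [h2] at h1
        exact h1
      have hlow : ∀ K : ℕ, N ≤ K → m ≤ D K := by
        intro K hK
        induction K, hK using Nat.le_induction with
        | base => exact min_le_left _ _
        | succ K hK ih =>
          have h1 : c * ε * D K ^ (1 - α) ≤ D (K + 1) := by
            have := hkey (K + 1) (by omega)
            simpa using this
          have h2 : m ^ (1 - α) ≤ D K ^ (1 - α) :=
            Real.rpow_le_rpow hm.le ih (by linarith)
          have h3 : m ≤ c * ε * m ^ (1 - α) := by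
            have : m ^ α * m ^ (1 - α) ≤ c * ε * m ^ (1 - α) :=
              mul_le_mul_of_nonneg_right hmα (Real.rpow_nonneg hm.le _)
            rwa [← Real.rpow_add hm, add_sub_cancel, Real.rpow_one] at this
          have h4 : c * ε * m ^ (1 - α) ≤ c * ε * D K ^ (1 - α) :=
            mul_le_mul_of_nonneg_left h2 (by positivity)
          linarith
      -- contradiction with D → 0
      obtain ⟨N4, hN4⟩ := eventually_atTop.mp (hDto0.eventually (eventually_lt_nhds hm))
      have h5 : m ≤ D (N + N4) := hlow _ (by omega)
      have h6 : D (N + N4) < m := hN4 _ (by omega)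
      linarith
    · -- case 1 ≤ α : eventually D K ≥ c * ε, contradiction with D → 0
      push_neg at hα1
      have hev1 : ∀ᶠ K in atTop, D K < 1 := hDto0.eventually (eventually_lt_nhds one_pos)
      obtain ⟨N2, hN2⟩ := eventually_atTop.mp hev1
      have hev2 : ∀ᶠ K in atTop, D K < c * ε :=
        hDto0.eventually (eventually_lt_nhds (by positivity))
      obtain ⟨N3, hN3⟩ := eventually_atTop.mp hev2
      set K := N + N2 + N3 + 1 with hK_def
      have h1 : c * ε * D (K - 1) ^ (1 - α) ≤ D K := hkey K (by omega)
      have h2 : (1:ℝ) ≤ D (K - 1) ^ (1 - α) :=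
        Real.one_le_rpow_of_pos_of_le_one_of_nonpos (hD0 _)
          (hN2 (K - 1) (by omega)).le (by linarith)
      have h3 : D K < c * ε := hN3 K (by omega)
      nlinarith [hD0 K, hc, hε]
  · rw [Real.sSup_of_not_bddAbove hbdd] at hne
    exact hne rfl
end
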